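/- Let $\bar{T}$ be a symmetric, trace-free, divergence-free 2-tensor on $\mathbb{R}^3$ (with respect to the Euclidean metric $\delta$) lying in a weighted Sobolev space $H^{k-2,\beta-2}$ with $\beta \in (-1,0)$, $k \geq 4$. If $\varepsilon^{eb}{}_a \partial_b \bar{T}_{ce} = 0$ (i.e. for each fixed $c$, the vector-valued 1-form $\bar{T}_{cb}\, dx^b$ is closed), then $\bar{T} = 0$. -/

import Mathlib

/-!
Symmetry of `T` and closedness of each row give `∂ᵢ T_cb = ∂_b T_ci`, hence
`Δ T_cb = ∂_b (∂ⁱ T_ci) = 0` by the divergence condition: every entry of `T` is harmonic.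
Since `β < 0`, the weights in `H^{k-2,β-2}` are bounded below by `1`, so each entry `u`
lies in the unweighted `H²(ℝ³)`. Integrating by parts, `∫ |∇u|² = -∫ u Δu = 0`, so `u` is
constant, and a constant in `L²(ℝ³)` vanishes.
-/

noncomputable section
open scoped BigOperators
open MeasureTheory Real

/-- Points of `ℝ³`. -/
abbrev Pt := Fin 3 → ℝ

/-- Partial derivative of a (possibly vector-valued) function in the `i`-th coordinate
direction. -/
def pder {F : Type*} [NormedAddCommGroup F] [NormedSpace ℝ F]
    (i : Fin 3) (f : Pt → F) (x : Pt) : F :=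
  fderiv ℝ f x (Pi.single i 1)

/-- The alternating (permutation) symbol on three indices. -/
def epsSym (a b c : Fin 3) : ℝ :=
  (((b : ℕ) : ℝ) - ((a : ℕ) : ℝ)) * (((c : ℕ) : ℝ) - ((b : ℕ) : ℝ)) *
    (((c : ℕ) : ℝ) - ((a : ℕ) : ℝ)) / 2

/-- Kronecker delta. -/
def kd (a b : Fin 3) : ℝ := if a = b then 1 else 0

/-- Symmetry of a 2-tensor. -/
def sym2 (T : Fin 3 → Fin 3 → ℝ) : Prop := ∀ a b, T a b = T b a

/-- Bartnik's weight function `σ(x) = (1 + |x|²)^{1/2}`. -/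
def wWeight (x : Pt) : ℝ := Real.sqrt (1 + ‖x‖ ^ 2)

/-- Membership in the weighted Sobolev space `H^{k,β}` (Bartnik's convention). -/
def Hmem {F : Type*} [NormedAddCommGroup F] [NormedSpace ℝ F]
    (k : ℕ) (β : ℝ) (f : Pt → F) : Prop :=
  ContDiff ℝ k f ∧ ∀ l ≤ k,
    Integrable fun x => ‖iteratedFDeriv ℝ l f x‖ ^ 2 * wWeight x ^ (-2 * (β - (l : ℝ)) - 3)

/-- The weighted Sobolev norm `‖·‖_{H^{k,β}}` (Bartnik's convention). -/
def wnorm {F : Type*} [NormedAddCommGroup F] [NormedSpace ℝ F]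
    (k : ℕ) (β : ℝ) (f : Pt → F) : ℝ :=
  (∑ l ∈ Finset.range (k + 1),
    ∫ x, ‖iteratedFDeriv ℝ l f x‖ ^ 2 * wWeight x ^ (-2 * (β - (l : ℝ)) - 3)) ^ (1/2 : ℝ)

/-- Euclidean Laplacian of a scalar function on `ℝ³`. -/
def lapE (f : Pt → ℝ) (x : Pt) : ℝ := ∑ i, pder i (pder i f) x

section PartialDerivatives

variable {F : Type*} [NormedAddCommGroup F] [NormedSpace ℝ F]

theorem norm_pder_le_norm_iteratedFDeriv_one (i : Fin 3) (f : Pt → F) (x : Pt) :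
    ‖pder i f x‖ ≤ ‖iteratedFDeriv ℝ 1 f x‖ := by
  rw [norm_iteratedFDeriv_one]
  simpa [pder, Pi.norm_single] using (fderiv ℝ f x).le_opNorm (Pi.single i 1)

theorem differentiable_pder {f : Pt → F} (hf : ContDiff ℝ 2 f) (i : Fin 3) :
    Differentiable ℝ (pder i f) :=
  ((hf.fderiv_right (m := 1) (by norm_num)).differentiable one_ne_zero).clm_apply
    (differentiable_const _)

theorem pder_pder_eq_fderiv_fderiv {f : Pt → F} (hf : ContDiff ℝ 2 f) (i j : Fin 3) (x : Pt) :
    pder i (pder j f) x = fderiv ℝ (fderiv ℝ f) x (Pi.single i 1) (Pi.single j 1) := by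
  have hdf : Differentiable ℝ (fderiv ℝ f) :=
    (hf.fderiv_right (m := 1) (by norm_num)).differentiable one_ne_zero
  unfold pder
  rw [fderiv_clm_apply (hdf x) (differentiableAt_const _)]
  simp

theorem continuous_pder_pder {f : Pt → F} (hf : ContDiff ℝ 2 f) (i j : Fin 3) :
    Continuous (pder i (pder j f)) := by
  have hcont := (hf.fderiv_right (m := 1) (by norm_num)).continuous_fderiv one_ne_zero
  simpa only [funext (pder_pder_eq_fderiv_fderiv hf i j)] using
    (hcont.clm_apply continuous_const).clm_apply continuous_const

theorem norm_pder_pder_le_norm_iteratedFDeriv_two {f : Pt → F} (hf : ContDiff ℝ 2 f)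
    (i j : Fin 3) (x : Pt) : ‖pder i (pder j f) x‖ ≤ ‖iteratedFDeriv ℝ 2 f x‖ := by
  have := (iteratedFDeriv ℝ 2 f x).le_opNorm ![Pi.single i 1, Pi.single j 1]
  rw [iteratedFDeriv_two_apply] at this
  simpa [pder_pder_eq_fderiv_fderiv hf, Fin.prod_univ_two, Pi.norm_single] using this

theorem pder_pder_comm {f : Pt → F} (hf : ContDiff ℝ 2 f) (i j : Fin 3) (x : Pt) :
    pder i (pder j f) x = pder j (pder i f) x := by
  rw [pder_pder_eq_fderiv_fderiv hf, pder_pder_eq_fderiv_fderiv hf]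
  exact hf.contDiffAt.isSymmSndFDerivAt (by simp) _ _

theorem pder_fun_sum {ι : Type*} {s : Finset ι} {f : ι → Pt → F}
    (hf : ∀ j ∈ s, Differentiable ℝ (f j)) (i : Fin 3) (x : Pt) :
    pder i (fun y => ∑ j ∈ s, f j y) x = ∑ j ∈ s, pder i (f j) x := by
  unfold pder
  rw [fderiv_fun_sum fun j hj => hf j hj x]
  simp

theorem fderiv_eq_zero_of_pder_eq_zero {f : Pt → F} {x : Pt} (h : ∀ i, pder i f x = 0) :
    fderiv ℝ f x = 0 := by
  refine ContinuousLinearMap.coe_injective (LinearMap.pi_ext fun i t => ?_)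
  have hsingle : (Pi.single i t : Pt) = t • Pi.single i 1 := by simp [← Pi.single_smul]
  simp [hsingle, show fderiv ℝ f x (Pi.single i 1) = 0 from h i]

end PartialDerivatives

theorem symm_of_sum_epsSym_mul_eq_zero {M : Fin 3 → Fin 3 → ℝ}
    (h : ∀ a, ∑ e, ∑ b, epsSym e b a * M b e = 0) (i j : Fin 3) : M i j = M j i := by
  have h0 := h 0
  have h1 := h 1
  have h2 := h 2
  simp only [Fin.sum_univ_three, epsSym] at h0 h1 h2
  norm_num at h0 h1 h2
  fin_cases i <;> fin_cases j <;> dsimp <;> linarith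

theorem lapE_entry_eq_zero {T : Pt → Fin 3 → Fin 3 → ℝ} (hT : ContDiff ℝ 2 T)
    (hsymm : ∀ x, sym2 (T x)) (hdiv : ∀ x b, ∑ a, pder a (fun y => T y a b) x = 0)
    (hcomm : ∀ x c i j, pder i (fun y => T y c j) x = pder j (fun y => T y c i) x)
    (c b : Fin 3) (x : Pt) : lapE (fun y => T y c b) x = 0 := by
  have hentry : ∀ i, ContDiff ℝ 2 fun y => T y c i := contDiff_pi.1 (contDiff_pi.1 hT c)
  have hdiv_row : (fun y => ∑ i, pder i (fun z => T z c i) y) = fun _ => 0 := by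
    funext y
    rw [← hdiv y c]
    exact Finset.sum_congr rfl fun i _ => congrArg (pder i · y) (funext fun z => hsymm z c i)
  calc lapE (fun y => T y c b) x
      = ∑ i, pder b (pder i fun y => T y c i) x := by
        refine Finset.sum_congr rfl fun i _ => ?_
        rw [show pder i (fun y => T y c b) = pder b (fun y => T y c i) from
          funext fun y => hcomm y c i b, pder_pder_comm (hentry i)]
    _ = pder b (fun y => ∑ i, pder i (fun z => T z c i) y) x :=
        (pder_fun_sum (fun i _ => differentiable_pder (hentry i) i) b x).symm
    _ = 0 := by rw [hdiv_row]; simp [pder]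

section HarmonicL2

variable {u : Pt → ℝ} {i : Fin 3}

theorem integral_pder_mul_pder_eq_neg (hu : ContDiff ℝ 2 u) (h0 : MemLp u 2)
    (h1 : MemLp (pder i u) 2) (h2 : MemLp (pder i (pder i u)) 2) :
    ∫ x, pder i u x * pder i u x = -∫ x, u x * pder i (pder i u) x :=
  neg_eq_iff_eq_neg.1 (integral_mul_fderiv_eq_neg_fderiv_mul_of_integrable (v := Pi.single i 1)
    (h1.integrable_mul h1) (h0.integrable_mul h2) (h0.integrable_mul h1)
    (fun x _ => (hu.differentiable (by norm_num)) x)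
    (fun x _ => differentiable_pder hu i x)).symm

theorem integral_sum_sq_pder_eq_zero (hu : ContDiff ℝ 2 u) (hΔ : ∀ x, lapE u x = 0)
    (h0 : MemLp u 2) (h1 : ∀ i, MemLp (pder i u) 2) (h2 : ∀ i, MemLp (pder i (pder i u)) 2) :
    ∫ x, ∑ i, pder i u x ^ 2 = 0 := calc
  ∫ x, ∑ i, pder i u x ^ 2 = ∑ i, ∫ x, pder i u x * pder i u x := by
    simp only [sq]
    exact integral_finsetSum _ fun i _ => (h1 i).integrable_mul (h1 i)
  _ = -∫ x, u x * lapE u x := by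
    simp only [integral_pder_mul_pder_eq_neg hu h0 (h1 _) (h2 _), lapE, Finset.mul_sum,
      Finset.sum_neg_distrib]
    exact congrArg Neg.neg (integral_finsetSum _ fun i _ => h0.integrable_mul (h2 i)).symm
  _ = 0 := by simp [hΔ]

theorem pder_eq_zero_of_lapE_eq_zero (hu : ContDiff ℝ 2 u) (hΔ : ∀ x, lapE u x = 0)
    (h0 : MemLp u 2) (h1 : ∀ i, MemLp (pder i u) 2) (h2 : ∀ i, MemLp (pder i (pder i u)) 2)
    (i : Fin 3) (x : Pt) : pder i u x = 0 := by
  have hcont : Continuous fun x => ∑ i, pder i u x ^ 2 :=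
    continuous_finsetSum _ fun i _ => ((differentiable_pder hu i).continuous).pow 2
  have hint : Integrable fun x => ∑ i, pder i u x ^ 2 :=
    integrable_finsetSum _ fun i _ => by simp only [sq]; exact (h1 i).integrable_mul (h1 i)
  have hae := (integral_eq_zero_iff_of_nonneg (fun x => by positivity) hint).1
    (integral_sum_sq_pder_eq_zero hu hΔ h0 h1 h2)
  have hsum := congrFun ((hcont.ae_eq_iff_eq volume continuous_const).1 hae) x
  exact pow_eq_zero_iff two_ne_zero |>.1 <|
    (Finset.sum_eq_zero_iff_of_nonneg fun _ _ => sq_nonneg _).1 hsum i (Finset.mem_univ i)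

theorem eq_zero_of_lapE_eq_zero_of_memLp (hu : ContDiff ℝ 2 u) (hΔ : ∀ x, lapE u x = 0)
    (hL2 : ∀ l ≤ 2, MemLp (iteratedFDeriv ℝ l u) 2) : u = 0 := by
  have h0 : MemLp u 2 := (hL2 0 (by norm_num)).of_le hu.continuous.aestronglyMeasurable
    (ae_of_all _ fun x => by simp)
  have h1 : ∀ i, MemLp (pder i u) 2 := fun i =>
    (hL2 1 (by norm_num)).of_le (differentiable_pder hu i).continuous.aestronglyMeasurable
      (ae_of_all _ (norm_pder_le_norm_iteratedFDeriv_one i u))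
  have h2 : ∀ i, MemLp (pder i (pder i u)) 2 := fun i =>
    (hL2 2 le_rfl).of_le (continuous_pder_pder hu i i).aestronglyMeasurable
      (ae_of_all _ (norm_pder_pder_le_norm_iteratedFDeriv_two hu i i))
  have hgrad : ∀ x, fderiv ℝ u x = 0 := fun x =>
    fderiv_eq_zero_of_pder_eq_zero (pder_eq_zero_of_lapE_eq_zero hu hΔ h0 h1 h2 · x)
  have hconst : u = fun _ => u 0 :=
    funext fun x => is_const_of_fderiv_eq_zero (hu.differentiable (by norm_num)) hgrad x 0
  rw [hconst] at h0 ⊢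
  ext
  simpa using (memLp_const_iff two_ne_zero ENNReal.ofNat_ne_top).1 h0

end HarmonicL2

theorem one_le_wWeight (x : Pt) : 1 ≤ wWeight x :=
  Real.one_le_sqrt.2 (le_add_of_nonneg_right (sq_nonneg _))

theorem Hmem.memLp_iteratedFDeriv {F : Type*} [NormedAddCommGroup F] [NormedSpace ℝ F]
    {k : ℕ} {β : ℝ} {f : Pt → F} (hf : Hmem k β f) {l : ℕ} (hl : l ≤ k)
    (hβ : β ≤ l - 3 / 2) :
    MemLp (iteratedFDeriv ℝ l f) 2 := by
  -- `hβ` makes the weight exponent `-2 (β - l) - 3` nonnegative, so the weight is at least `1`.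
  have hcont : Continuous (iteratedFDeriv ℝ l f) :=
    hf.1.continuous_iteratedFDeriv (by exact_mod_cast hl)
  refine (memLp_two_iff_integrable_sq_norm hcont.aestronglyMeasurable).2 <|
    (hf.2 l hl).mono' (hcont.norm.pow 2).aestronglyMeasurable (ae_of_all _ fun x => ?_)
  rw [Real.norm_of_nonneg (sq_nonneg _)]
  exact le_mul_of_one_le_right (sq_nonneg _) (Real.one_le_rpow (one_le_wWeight x) (by linarith))

theorem memLp_iteratedFDeriv_apply {ι F : Type*} [Fintype ι] [NormedAddCommGroup F]
    [NormedSpace ℝ F] {n : ℕ} {f : Pt → ι → F} (hf : ContDiff ℝ n f) {l : ℕ}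
    (hl : l ≤ n) (hL2 : MemLp (iteratedFDeriv ℝ l f) 2) (i : ι) :
    MemLp (iteratedFDeriv ℝ l fun x => f x i) 2 := by
  set P : (ι → F) →L[ℝ] F := ContinuousLinearMap.proj i
  have hproj : ‖P‖ ≤ 1 :=
    ContinuousLinearMap.opNorm_le_bound _ zero_le_one fun v => by
      simpa [P] using norm_le_pi_norm v i
  have hcomp : (fun x => f x i) = P ∘ f := rfl
  have hcont := (contDiff_pi.1 hf i).continuous_iteratedFDeriv (m := l) (by exact_mod_cast hl)
  refine hL2.of_le hcont.aestronglyMeasurable (ae_of_all _ fun x => ?_)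
  rw [hcomp]
  calc ‖iteratedFDeriv ℝ l (P ∘ f) x‖ ≤ ‖P‖ * ‖iteratedFDeriv ℝ l f x‖ :=
        P.norm_iteratedFDeriv_comp_left hf.contDiffAt (by exact_mod_cast hl)
    _ ≤ ‖iteratedFDeriv ℝ l f x‖ := mul_le_of_le_one_left (norm_nonneg _) hproj

theorem closed_TT_tensor_vanishes_general
    (k : ℕ) (hk : 4 ≤ k) (β : ℝ) (hβ : β ∈ Set.Ioo (-1 : ℝ) 0)
    (T : Pt → Fin 3 → Fin 3 → ℝ)
    (hmem : Hmem (k - 2) (β - 2) T)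
    (hsymm : ∀ x, sym2 (T x))
    (hdiv : ∀ x b, (∑ a, pder a (fun y => T y a b) x) = 0)
    (hclosed : ∀ x a c, (∑ e, ∑ b, epsSym e b a * pder b (fun y => T y c e) x) = 0) :
    T = 0 := by
  have hT : ContDiff ℝ 2 T := hmem.1.of_le (by exact_mod_cast (by omega : 2 ≤ k - 2))
  have hL2 : ∀ l ≤ 2, MemLp (iteratedFDeriv ℝ l T) 2 := fun l hl =>
    hmem.memLp_iteratedFDeriv (by omega) (by linarith [hβ.2, l.cast_nonneg (α := ℝ)])
  have hcomm : ∀ x c i j, pder i (fun y => T y c j) x = pder j (fun y => T y c i) x :=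
    fun x c => symm_of_sum_epsSym_mul_eq_zero fun a => hclosed x a c
  funext x c b
  refine congrFun (eq_zero_of_lapE_eq_zero_of_memLp ((contDiff_pi.1 (contDiff_pi.1 hT c)) b)
    (lapE_entry_eq_zero hT hsymm hdiv hcomm c b) fun l hl => ?_) x
  exact memLp_iteratedFDeriv_apply (contDiff_pi.1 hT c) hl
    (memLp_iteratedFDeriv_apply hT hl (hL2 l hl) c) b

/-- **Injectivity step in Theorem A for `T̄`**: a symmetric, trace-free, divergence-free
2-tensor `T̄ ∈ H^{k-2,β-2}` on Euclidean `ℝ³` (`β ∈ (-1,0)`, `k ≥ 4`) with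
`ε^{eb}{}_a ∂_b T̄_{ce} = 0` (i.e. each vector-valued 1-form `T̄_{cb} dx^b` is closed)
vanishes identically. -/
theorem closed_TT_tensor_vanishes
    (k : ℕ) (hk : 4 ≤ k) (β : ℝ) (hβ : β ∈ Set.Ioo (-1 : ℝ) 0)
    (T : Pt → Fin 3 → Fin 3 → ℝ)
    (hmem : Hmem (k - 2) (β - 2) T)
    (hsymm : ∀ x, sym2 (T x))
    (htr : ∀ x, (∑ a, T x a a) = 0)
    (hdiv : ∀ x b, (∑ a, pder a (fun y => T y a b) x) = 0)
    (hclosed : ∀ x a c, (∑ e, ∑ b, epsSym e b a * pder b (fun y => T y c e) x) = 0) :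
    T = 0 :=
  closed_TT_tensor_vanishes_general k hk β hβ T hmem hsymm hdiv hclosed
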